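/- arXiv:1910.09946 — 2 statements merged into one kernel-verified Lean document; each statement's English description precedes it below -/
import Mathlib

section
/- Let H be a real inner product space and (M_t)_{t∈T} a lower directed family of complete convex cones in H containing 0, with intersection M also a complete convex cone. For μ ∈ H, let P_t μ denote the orthogonal projection of μ onto M_t and Pμ the projection onto M. Assume every norm-bounded, norm-Cauchy net in H converges in H and each M_t is closed. Then the net (P_t μ) converges in norm to Pμ. -/
noncomputable section

private lemma key_est {H : Type*} [NormedAddCommGroup H] [InnerProductSpace ℝ H]
    {C : Set H} (hc : Convex ℝ C) {μ x y : H} (hx : x ∈ C) (hy : y ∈ C)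
    (hmin : ∀ ν ∈ C, ‖μ - x‖ ≤ ‖μ - ν‖) :
    ‖y - x‖ ^ 2 ≤ 2 * (‖μ - y‖ ^ 2 - ‖μ - x‖ ^ 2) := by
  have hmid : (1/2 : ℝ) • x + (1/2 : ℝ) • y ∈ C :=
    hc hx hy (by norm_num) (by norm_num) (by norm_num)
  set m := (1/2 : ℝ) • x + (1/2 : ℝ) • y with hm
  have h1 : ‖μ - x‖ ≤ ‖μ - m‖ := hmin m hmid
  have hpar := parallelogram_law_with_norm ℝ (μ - x) (μ - y)
  have hsum : (μ - x) + (μ - y) = (2 : ℝ) • (μ - m) := by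
    rw [hm]; module
  have hdiff : (μ - x) - (μ - y) = y - x := by abel
  rw [hsum, hdiff, norm_smul] at hpar
  simp only [Real.norm_ofNat] at hpar
  have h0x : (0:ℝ) ≤ ‖μ - x‖ := norm_nonneg _
  have h0m : (0:ℝ) ≤ ‖μ - m‖ := norm_nonneg _
  nlinarith [h1, hpar, sq_nonneg (‖μ - m‖ - ‖μ - x‖)]

/-- Let `(M t)` be a family of complete, closed convex cones containing `0` in a
real inner product space `H`, decreasing along a directed index set, with
intersection `Minf` also a complete convex cone. Assuming every Cauchy filter in
`H` converges (completeness, the filter form of "every norm-bounded norm-Cauchy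
net converges"), the net of orthogonal projections `P t` of `μ` onto `M t`
converges in norm to the projection `Q` of `μ` onto `Minf`. -/
theorem projections_tendsto_of_directed {H : Type*} [NormedAddCommGroup H]
    [InnerProductSpace ℝ H] [CompleteSpace H]
    {T : Type*} [Preorder T] [Nonempty T]
    (hdir : ∀ t t' : T, ∃ s, t ≤ s ∧ t' ≤ s)
    (M : T → Set H) (hmono : ∀ {t s : T}, t ≤ s → M s ⊆ M t)
    (hconv : ∀ t, Convex ℝ (M t)) (h0 : ∀ t, 0 ∈ M t)
    (hcone : ∀ t, ∀ c : ℝ, 0 ≤ c → ∀ x ∈ M t, c • x ∈ M t)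
    (hclosed : ∀ t, IsClosed (M t)) (hcomplete : ∀ t, IsComplete (M t))
    (Minf : Set H) (hMinf : Minf = ⋂ t, M t)
    (hMinfconv : Convex ℝ Minf) (hMinf0 : 0 ∈ Minf)
    (hMinfcone : ∀ c : ℝ, 0 ≤ c → ∀ x ∈ Minf, c • x ∈ Minf)
    (hMinfcomplete : IsComplete Minf)
    (μ : H) (P : T → H)
    (hP : ∀ t, P t ∈ M t ∧ ∀ ν ∈ M t, ‖μ - P t‖ ≤ ‖μ - ν‖)
    (Q : H) (hQmem : Q ∈ Minf) (hQ : ∀ ν ∈ Minf, ‖μ - Q‖ ≤ ‖μ - ν‖) :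
    Filter.Tendsto P Filter.atTop (nhds Q) := by
  haveI : IsDirected T (· ≤ ·) := ⟨hdir⟩
  haveI : (Filter.atTop : Filter T).NeBot :=
    Filter.atTop_neBot_iff.2 ⟨‹Nonempty T›, ‹IsDirected T (· ≤ ·)›⟩
  set d : T → ℝ := fun t => ‖μ - P t‖ with hd
  have hQmemMt : ∀ t, Q ∈ M t := by
    intro t
    have := hQmem
    rw [hMinf] at this
    exact Set.mem_iInter.1 this t
  have hdmono : ∀ {t s : T}, t ≤ s → d t ≤ d s := by
    intro t s hts
    exact (hP t).2 (P s) (hmono hts (hP s).1)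
  have hdle : ∀ t, d t ≤ ‖μ - Q‖ := fun t => (hP t).2 Q (hQmemMt t)
  -- the key estimate between projections
  have hkey : ∀ {t s : T}, t ≤ s → ‖P s - P t‖ ^ 2 ≤ 2 * (d s ^ 2 - d t ^ 2) := by
    intro t s hts
    exact key_est (hconv t) (hP t).1 (hmono hts (hP s).1) (hP t).2
  have hbdd : BddAbove (Set.range fun t => d t ^ 2) := by
    refine ⟨‖μ - Q‖ ^ 2, ?_⟩
    rintro _ ⟨t, rfl⟩
    exact pow_le_pow_left₀ (norm_nonneg _) (hdle t) 2
  set D2 : ℝ := ⨆ t, d t ^ 2 with hD2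
  have hD2le : ∀ t, d t ^ 2 ≤ D2 := fun t => le_ciSup hbdd t
  -- the net (P t) is Cauchy
  have hcauchy : Cauchy (Filter.map P Filter.atTop) := by
    rw [Metric.cauchy_iff]
    refine ⟨Filter.map_neBot, fun ε hε => ?_⟩
    obtain ⟨t₀, ht₀⟩ : ∃ t₀, D2 - ε ^ 2 / 16 < d t₀ ^ 2 :=
      exists_lt_of_lt_ciSup (by nlinarith)
    refine ⟨P '' Set.Ici t₀, Filter.image_mem_map (Filter.Ici_mem_atTop t₀), ?_⟩
    rintro _ ⟨s, hs, rfl⟩ _ ⟨s', hs', rfl⟩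
    obtain ⟨u, hu, hu'⟩ := hdir s s'
    have est : ∀ {v : T}, t₀ ≤ v → v ≤ u → ‖P u - P v‖ < ε / 2 := by
      intro v hv hvu
      have h1 : ‖P u - P v‖ ^ 2 ≤ 2 * (d u ^ 2 - d v ^ 2) := hkey hvu
      have h2 : d t₀ ≤ d v := hdmono hv
      have h3 : d u ^ 2 ≤ D2 := hD2le u
      have h4 : d t₀ ^ 2 ≤ d v ^ 2 :=
        pow_le_pow_left₀ (norm_nonneg _) h2 2
      have h5 : ‖P u - P v‖ ^ 2 < ε ^ 2 / 4 := by nlinarith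
      nlinarith [norm_nonneg (P u - P v), hε]
    have e1 : dist (P s) (P u) < ε / 2 := by
      rw [dist_eq_norm, norm_sub_rev]; exact est hs hu
    have e2 : dist (P u) (P s') < ε / 2 := by
      rw [dist_eq_norm]; exact est hs' hu'
    calc dist (P s) (P s') ≤ dist (P s) (P u) + dist (P u) (P s') := dist_triangle _ _ _
      _ < ε / 2 + ε / 2 := add_lt_add e1 e2
      _ = ε := by ring
  obtain ⟨L, hL⟩ := CompleteSpace.complete hcauchy
  have hLtendsto : Filter.Tendsto P Filter.atTop (nhds L) := hL
  have hLmem : L ∈ Minf := by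
    rw [hMinf, Set.mem_iInter]
    intro t
    refine (hclosed t).mem_of_tendsto hLtendsto ?_
    filter_upwards [Filter.Ici_mem_atTop t] with s hs
    exact hmono hs (hP s).1
  have hnorm : Filter.Tendsto (fun t => ‖μ - P t‖) Filter.atTop (nhds ‖μ - L‖) :=
    (Filter.Tendsto.sub tendsto_const_nhds hLtendsto).norm
  have hle : ‖μ - L‖ ≤ ‖μ - Q‖ := le_of_tendsto hnorm (Filter.Eventually.of_forall hdle)
  have hge : ‖μ - Q‖ ≤ ‖μ - L‖ := hQ L hLmem
  have heq : ‖μ - L‖ = ‖μ - Q‖ := le_antisymm hle hge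
  have hLQ : L = Q := by
    have := key_est hMinfconv hQmem hLmem hQ
    rw [heq] at this
    have h0 : ‖L - Q‖ ^ 2 ≤ 0 := by nlinarith
    have : ‖L - Q‖ = 0 := by nlinarith [norm_nonneg (L - Q)]
    exact sub_eq_zero.1 (norm_eq_zero.1 this)
  exact hLQ ▸ hLtendsto
end
end

section
/- Let A ⊆ ℝⁿ be arbitrary, fix q > 1, and set A_k = A ∩ {x : q^k ≤ |x| < q^{k+1}} for k ∈ ℕ. If Σ_k c_α(A_k) / q^{k(n−α)} < ∞, then there exists a positive Radon measure ξ on ℝⁿ whose Riesz potential U^ξ is not identically +∞ and satisfies U^ξ ≥ 1 nearly everywhere on A (i.e., the exceptional subset of A has inner Riesz capacity zero). -/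
/-!
Write `W(S) = 1 / c_α(S)` for the Wiener energy. Equilibrium measures are replaced by a doubling
argument: if `μ` is a probability measure on `S` with `E(μ) ≤ 3/2 · W(S)`, then on the part of `S`
where `U^μ ≤ W(S)/4` the Wiener energy is at least `2 W(S)`. Iterating and summing the rescaled
near-minimisers gives, for every `S` with `W(S) > 0`, a measure of mass at most `8 c_α(S)` carried
by `S` whose potential is `≥ 1` on `S` off a set of zero capacity.

Apply this to `A ∩ B(0,1)` and to each shell `A_k`, and add the measures. The exceptional set is a
countable union of sets of zero capacity. At a point `x` with `|x| < 1/2` where the potential of the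
first measure is finite (it exists by local integrability of the kernel), the shell measures
contribute at most `8 · 2^(n-α) Σ_k c_α(A_k) / q^(k(n-α)) < ∞`.
-/

open MeasureTheory ENNReal Set
noncomputable section

/-- Euclidean space ℝⁿ. -/
abbrev Eucl (n : ℕ) := EuclideanSpace ℝ (Fin n)

/-- The Riesz kernel `|x - z|^(α - n)` of order `α` on ℝⁿ, with values in `ℝ≥0∞`
(so that the kernel is `∞` on the diagonal). -/
def rieszK (α : ℝ) (n : ℕ) (x z : Eucl n) : ℝ≥0∞ :=
  (ENNReal.ofReal ‖x - z‖) ^ (α - (n : ℝ))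

/-- The Riesz potential `U^μ(x) = ∫ |x - z|^(α-n) dμ(z)`. -/
def pot (α : ℝ) (n : ℕ) (μ : Measure (Eucl n)) (x : Eucl n) : ℝ≥0∞ :=
  ∫⁻ z, rieszK α n x z ∂μ

/-- The mutual Riesz energy `E(μ, ν) = ∬ |x - z|^(α-n) d(μ ⊗ ν)(x, z)`. -/
def energy (α : ℝ) (n : ℕ) (μ ν : Measure (Eucl n)) : ℝ≥0∞ :=
  ∫⁻ x, pot α n ν x ∂μ

/-- The inner Riesz capacity `c_α(A) = 1 / inf {E(μ) : μ carried by A, μ(ℝⁿ) = 1}`. -/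
def innerCap (α : ℝ) (n : ℕ) (A : Set (Eucl n)) : ℝ≥0∞ :=
  1 / ⨅ (μ : Measure (Eucl n)) (_ : μ Aᶜ = 0 ∧ μ Set.univ = 1), energy α n μ μ

namespace Riesz

open Metric

variable {n : ℕ} {α : ℝ}

lemma rieszK_comm (x z : Eucl n) : rieszK α n x z = rieszK α n z x := by
  rw [rieszK, rieszK, norm_sub_rev]

lemma measurable_rieszK : Measurable fun p : Eucl n × Eucl n => rieszK α n p.1 p.2 :=
  (ENNReal.continuous_rpow_const.comp
    (ENNReal.continuous_ofReal.comp (continuous_fst.sub continuous_snd).norm)).measurable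

lemma rieszK_le (hαn : α ≤ n) {x z : Eucl n} {d : ℝ} (h : d ≤ ‖x - z‖) :
    rieszK α n x z ≤ ENNReal.ofReal d ^ (α - n) := by
  rw [rieszK, ← neg_sub (n : ℝ), ENNReal.rpow_neg, ENNReal.rpow_neg]
  gcongr

lemma le_rieszK (hαn : α ≤ n) {x z : Eucl n} {d : ℝ} (h : ‖x - z‖ ≤ d) :
    ENNReal.ofReal d ^ (α - n) ≤ rieszK α n x z := by
  rw [rieszK, ← neg_sub (n : ℝ), ENNReal.rpow_neg, ENNReal.rpow_neg]
  gcongr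

lemma measurable_pot (μ : Measure (Eucl n)) [SFinite μ] : Measurable (pot α n μ) :=
  measurable_rieszK.lintegral_prod_right

lemma pot_mono {μ ν : Measure (Eucl n)} (h : μ ≤ ν) (x : Eucl n) :
    pot α n μ x ≤ pot α n ν x :=
  lintegral_mono' h le_rfl

lemma pot_smul (c : ℝ≥0∞) (μ : Measure (Eucl n)) (x : Eucl n) :
    pot α n (c • μ) x = c * pot α n μ x :=
  lintegral_smul_measure ..

lemma pot_add (μ ν : Measure (Eucl n)) (x : Eucl n) :
    pot α n (μ + ν) x = pot α n μ x + pot α n ν x :=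
  lintegral_add_measure ..

lemma pot_sum {ι : Type*} (μ : ι → Measure (Eucl n)) (x : Eucl n) :
    pot α n (Measure.sum μ) x = ∑' i, pot α n (μ i) x :=
  lintegral_sum_measure ..

lemma pot_le_of_le_norm_sub (hαn : α ≤ n) {ζ : Measure (Eucl n)} {x : Eucl n} {d : ℝ}
    (hd : ∀ᵐ z ∂ζ, d ≤ ‖x - z‖) : pot α n ζ x ≤ ENNReal.ofReal d ^ (α - n) * ζ univ := by
  calc pot α n ζ x ≤ ∫⁻ _, ENNReal.ofReal d ^ (α - n) ∂ζ :=
        lintegral_mono_ae (hd.mono fun z hz => rieszK_le hαn hz)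
    _ = ENNReal.ofReal d ^ (α - n) * ζ univ := lintegral_const _

lemma le_pot_of_norm_sub_le (hαn : α ≤ n) {ζ : Measure (Eucl n)} {x : Eucl n} {d : ℝ}
    (hd : ∀ᵐ z ∂ζ, ‖x - z‖ ≤ d) : ENNReal.ofReal d ^ (α - n) * ζ univ ≤ pot α n ζ x :=
  (lintegral_const _).symm.trans_le (lintegral_mono_ae (hd.mono fun _ hz => le_rieszK hαn hz))

lemma energy_mono {μ μ' ν ν' : Measure (Eucl n)} (hμ : μ ≤ μ') (hν : ν ≤ ν') :
    energy α n μ ν ≤ energy α n μ' ν' :=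
  lintegral_mono' hμ fun x => pot_mono hν x

lemma energy_smul_left (c : ℝ≥0∞) (μ ν : Measure (Eucl n)) :
    energy α n (c • μ) ν = c * energy α n μ ν :=
  lintegral_smul_measure ..

lemma energy_smul_right {c : ℝ≥0∞} (hc : c ≠ ⊤) (μ ν : Measure (Eucl n)) :
    energy α n μ (c • ν) = c * energy α n μ ν := by
  simp only [energy, pot_smul]
  exact lintegral_const_mul' c _ hc

lemma energy_add_left (μ ν κ : Measure (Eucl n)) :
    energy α n (μ + ν) κ = energy α n μ κ + energy α n ν κ :=
  lintegral_add_measure ..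

lemma energy_add_right (κ μ ν : Measure (Eucl n)) [SFinite μ] :
    energy α n κ (μ + ν) = energy α n κ μ + energy α n κ ν := by
  simp only [energy, pot_add]
  exact lintegral_add_left (measurable_pot μ) _

lemma energy_comm (μ ν : Measure (Eucl n)) [SFinite μ] [SFinite ν] :
    energy α n μ ν = energy α n ν μ := by
  simp only [energy, pot]
  rw [lintegral_lintegral_swap measurable_rieszK.aemeasurable]
  simp_rw [rieszK_comm]

lemma energy_le_of_ae_pot_le {μ ν : Measure (Eucl n)} {c : ℝ≥0∞}
    (h : ∀ᵐ x ∂μ, pot α n ν x ≤ c) : energy α n μ ν ≤ c * μ univ :=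
  (lintegral_mono_ae h).trans_eq (lintegral_const c)

/-- The Wiener energy `W(S)`, so that `c_α(S) = 1 / W(S)`. -/
def minEnergy (α : ℝ) (n : ℕ) (S : Set (Eucl n)) : ℝ≥0∞ :=
  ⨅ (μ : Measure (Eucl n)) (_ : μ Sᶜ = 0 ∧ μ univ = 1), energy α n μ μ

lemma innerCap_eq_one_div_minEnergy (S : Set (Eucl n)) :
    innerCap α n S = 1 / minEnergy α n S :=
  rfl

lemma minEnergy_le {S : Set (Eucl n)} {μ : Measure (Eucl n)} (hS : μ Sᶜ = 0)
    (h1 : μ univ = 1) : minEnergy α n S ≤ energy α n μ μ :=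
  iInf₂_le μ ⟨hS, h1⟩

lemma le_minEnergy {S : Set (Eucl n)} {c : ℝ≥0∞}
    (h : ∀ μ : Measure (Eucl n), μ Sᶜ = 0 → μ univ = 1 → c ≤ energy α n μ μ) :
    c ≤ minEnergy α n S :=
  le_iInf₂ fun μ hμ => h μ hμ.1 hμ.2

lemma exists_energy_lt_of_minEnergy_lt {S : Set (Eucl n)} {c : ℝ≥0∞}
    (h : minEnergy α n S < c) :
    ∃ μ : Measure (Eucl n), μ Sᶜ = 0 ∧ μ univ = 1 ∧ energy α n μ μ < c := by
  obtain ⟨μ, hμ⟩ := iInf_lt_iff.mp h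
  obtain ⟨⟨hS, h1⟩, hlt⟩ := iInf_lt_iff.mp hμ
  exact ⟨μ, hS, h1, hlt⟩

lemma minEnergy_anti {S T : Set (Eucl n)} (h : S ⊆ T) : minEnergy α n T ≤ minEnergy α n S :=
  le_minEnergy fun _ hS h1 => minEnergy_le (measure_mono_null (compl_subset_compl.mpr h) hS) h1

lemma minEnergy_mul_sq_le {S : Set (Eucl n)} {ν : Measure (Eucl n)} [IsFiniteMeasure ν]
    (hS : ν Sᶜ = 0) : minEnergy α n S * ν univ ^ 2 ≤ energy α n ν ν := by
  rcases eq_or_ne (ν univ) 0 with h0 | h0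
  · simp [h0]
  set c := (ν univ)⁻¹
  have hc : c ≠ ⊤ := ENNReal.inv_ne_top.mpr h0
  have hmin : minEnergy α n S ≤ c * (c * energy α n ν ν) := by
    rw [← energy_smul_right hc, ← energy_smul_left]
    refine minEnergy_le (by simp [hS]) ?_
    simp [c, ENNReal.inv_mul_cancel h0 (measure_ne_top ν univ)]
  calc minEnergy α n S * ν univ ^ 2 ≤ c * (c * energy α n ν ν) * ν univ ^ 2 := by gcongr
    _ = (c * ν univ) ^ 2 * energy α n ν ν := by ring
    _ = energy α n ν ν := by
      rw [ENNReal.inv_mul_cancel h0 (measure_ne_top ν univ), one_pow, one_mul]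

lemma minEnergy_ne_zero (hαn : α ≤ n) {S : Set (Eucl n)} (hS : Bornology.IsBounded S) :
    minEnergy α n S ≠ 0 := by
  obtain ⟨d, hd⟩ := Metric.isBounded_iff.mp hS
  set D := max d 1
  have hpos : 0 < ENNReal.ofReal D ^ (α - n) :=
    ENNReal.rpow_pos (by simp [D]) ENNReal.ofReal_ne_top
  refine (hpos.trans_le (le_minEnergy fun μ hμS hμ1 => ?_)).ne'
  have hae : ∀ᵐ x ∂μ, x ∈ S := mem_ae_iff.mpr hμS
  have hdiam : ∀ x ∈ S, ∀ z ∈ S, ‖x - z‖ ≤ D := fun x hx z hz =>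
    (dist_eq_norm x z ▸ hd hx hz).trans (le_max_left d 1)
  calc ENNReal.ofReal D ^ (α - n) = ∫⁻ _, ENNReal.ofReal D ^ (α - n) ∂μ := by simp [hμ1]
    _ ≤ energy α n μ μ := lintegral_mono_ae <| hae.mono fun x hx => by
        simpa [hμ1] using le_pot_of_norm_sub_le hαn (hae.mono fun z hz => hdiam x hx z hz)

lemma minEnergy_eq_top_of_cover {ι : Type*} [Countable ι] {E : Set (Eucl n)}
    {R : ι → Set (Eucl n)} (hR : ∀ i, MeasurableSet (R i)) (hE : E ⊆ ⋃ i, R i)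
    (h : ∀ i, minEnergy α n (E ∩ R i) = ⊤) : minEnergy α n E = ⊤ := by
  refine top_unique (le_minEnergy fun μ hμE hμ1 => ?_)
  have : IsFiniteMeasure μ := ⟨by simp [hμ1]⟩
  obtain ⟨i, hi⟩ : ∃ i, μ (R i) ≠ 0 := by
    by_contra! h0
    have hcover : μ E = 0 := measure_mono_null hE (measure_iUnion_null h0)
    simpa [hcover, hμE, hμ1] using measure_univ_le_add_compl (μ := μ) E
  have hcar : μ.restrict (R i) (E ∩ R i)ᶜ = 0 := by
    rw [Measure.restrict_apply' (hR i)]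
    exact measure_mono_null (fun x hx => fun hxE => hx.1 ⟨hxE, hx.2⟩) hμE
  calc ⊤ = minEnergy α n (E ∩ R i) * μ.restrict (R i) univ ^ 2 := by simp [h i, hi]
    _ ≤ energy α n (μ.restrict (R i)) (μ.restrict (R i)) := minEnergy_mul_sq_le hcar
    _ ≤ energy α n μ μ := energy_mono Measure.restrict_le_self Measure.restrict_le_self

/-- Test `W(S)` against `μ + λ` for a competitor `λ` on the sublevel set:
`16 m ≤ E(μ + λ) = E(μ) + 2 E(λ, μ) + E(λ) ≤ 8 m + E(λ)`. -/
lemma le_minEnergy_sublevel {S : Set (Eucl n)} {μ : Measure (Eucl n)} (hμS : μ Sᶜ = 0)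
    (hμ1 : μ univ = 1) {m : ℝ≥0∞} (hm : m ≠ ⊤) (hS : 4 * m ≤ minEnergy α n S)
    (hE : energy α n μ μ ≤ 6 * m) : 8 * m ≤ minEnergy α n {x ∈ S | pot α n μ x ≤ m} := by
  refine le_minEnergy fun ν hνT hν1 => ?_
  have : IsFiniteMeasure μ := ⟨by simp [hμ1]⟩
  have : IsFiniteMeasure ν := ⟨by simp [hν1]⟩
  have hνS : ν Sᶜ = 0 := measure_mono_null (compl_subset_compl.mpr (sep_subset _ _)) hνT
  have hcross : energy α n ν μ ≤ m := by
    have hT : ∀ᵐ x ∂ν, x ∈ {x ∈ S | pot α n μ x ≤ m} := mem_ae_iff.mpr hνT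
    simpa [hν1] using energy_le_of_ae_pot_le (hT.mono fun x hx => hx.2)
  have hbase : 16 * m ≤ energy α n (μ + ν) (μ + ν) := by
    calc 16 * m = 4 * m * (μ + ν) univ ^ 2 := by
          rw [Measure.add_apply, hμ1, hν1]; ring
      _ ≤ minEnergy α n S * (μ + ν) univ ^ 2 := by gcongr
      _ ≤ energy α n (μ + ν) (μ + ν) := minEnergy_mul_sq_le (by simp [hμS, hνS])
  have hexpand : energy α n (μ + ν) (μ + ν)
      = energy α n μ μ + energy α n ν μ + energy α n ν μ + energy α n ν ν := by
    rw [energy_add_left, energy_add_right, energy_add_right, energy_comm μ ν]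
    ring
  have : 8 * m + 8 * m ≤ 8 * m + energy α n ν ν :=
    calc 8 * m + 8 * m = 16 * m := by ring
      _ ≤ 6 * m + m + m + energy α n ν ν := by
        rw [hexpand] at hbase
        exact hbase.trans (by gcongr)
      _ = 8 * m + energy α n ν ν := by ring
  exact (ENNReal.add_le_add_iff_left (by finiteness)).mp this

lemma exists_doubling_measure (S : Set (Eucl n)) :
    ∃ ν : Measure (Eucl n), ν Sᶜ = 0 ∧ ν univ ≤ 4 / minEnergy α n S ∧
      2 * minEnergy α n S ≤ minEnergy α n {x ∈ S | pot α n ν x < 1} := by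
  set w := minEnergy α n S
  by_cases hw : w = 0 ∨ w = ⊤
  · have hS : {x ∈ S | pot α n 0 x < 1} = S := by simp [pot]
    refine ⟨0, rfl, zero_le, ?_⟩
    rw [hS]
    rcases hw with hw | hw
    · simp [hw]
    · exact le_top.trans_eq hw.symm
  rw [not_or] at hw
  set m := w / 4
  have hm0 : m ≠ 0 := (ENNReal.div_pos hw.1 (by norm_num)).ne'
  have hmtop : m ≠ ⊤ := ENNReal.div_ne_top hw.2 (by norm_num)
  have hw4 : 4 * m = w := ENNReal.mul_div_cancel (by norm_num) (by norm_num)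
  have hw6 : w < 6 * m := by
    rw [← hw4]
    exact ENNReal.mul_lt_mul_left hm0 hmtop (by norm_num)
  obtain ⟨μ, hμS, hμ1, hE⟩ := exists_energy_lt_of_minEnergy_lt hw6
  refine ⟨m⁻¹ • μ, by simp [hμS], by simp [hμ1, m, ENNReal.inv_div], ?_⟩
  calc 2 * w = 8 * m := by rw [← hw4]; ring
    _ ≤ minEnergy α n {x ∈ S | pot α n μ x ≤ m} :=
      le_minEnergy_sublevel hμS hμ1 hmtop hw4.le hE.le
    _ ≤ minEnergy α n {x ∈ S | pot α n (m⁻¹ • μ) x < 1} := by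
      refine minEnergy_anti fun x hx => ⟨hx.1, ?_⟩
      have h := hx.2
      rw [pot_smul, ← ENNReal.div_eq_inv_mul, ENNReal.div_lt_iff (Or.inl hm0) (Or.inl hmtop),
        one_mul] at h
      exact h.le

lemma _root_.ENNReal.eq_top_of_forall_two_pow_mul_le {a b : ℝ≥0∞} (ha : a ≠ 0)
    (h : ∀ i : ℕ, 2 ^ i * a ≤ b) : b = ⊤ := by
  by_contra hb
  obtain ⟨N, hN⟩ := ENNReal.exists_nat_mul_gt ha hb
  have hN2 : (N : ℝ≥0∞) ≤ 2 ^ N := by exact_mod_cast Nat.lt_two_pow_self.le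
  exact (hN.trans_le ((mul_le_mul_left hN2 a).trans (h N))).false

def sublevelSeq (α : ℝ) (n : ℕ) (ν : Set (Eucl n) → Measure (Eucl n)) (A : Set (Eucl n)) :
    ℕ → Set (Eucl n)
  | 0 => A
  | i + 1 => {x ∈ sublevelSeq α n ν A i | pot α n (ν (sublevelSeq α n ν A i)) x < 1}

lemma sublevelSeq_subset (ν : Set (Eucl n) → Measure (Eucl n)) (A : Set (Eucl n)) :
    ∀ i, sublevelSeq α n ν A i ⊆ A
  | 0 => subset_rfl
  | i + 1 => (sep_subset _ _).trans (sublevelSeq_subset ν A i)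

lemma exists_measure_minEnergy_sublevel_eq_top {A : Set (Eucl n)} (hA : minEnergy α n A ≠ 0) :
    ∃ ξ : Measure (Eucl n), ξ Aᶜ = 0 ∧ ξ univ ≤ 8 / minEnergy α n A ∧
      minEnergy α n {x ∈ A | pot α n ξ x < 1} = ⊤ := by
  choose ν hνS hνmass hν2 using exists_doubling_measure (α := α) (n := n)
  set S := sublevelSeq α n ν A
  set w := minEnergy α n A
  have hSw : ∀ i, 2 ^ i * w ≤ minEnergy α n (S i) := by
    intro i
    induction i with
    | zero => simp [S, w, sublevelSeq]
    | succ i ih =>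
      calc 2 ^ (i + 1) * w = 2 * (2 ^ i * w) := by ring
        _ ≤ 2 * minEnergy α n (S i) := by gcongr
        _ ≤ minEnergy α n (S (i + 1)) := hν2 (S i)
  refine ⟨Measure.sum fun i => ν (S i), ?_, ?_, ?_⟩
  · exact Measure.sum_apply_eq_zero.mpr fun i =>
      measure_mono_null (compl_subset_compl.mpr (sublevelSeq_subset ν A i)) (hνS _)
  · have hterm : ∀ i, ν (S i) univ ≤ 4 / w * 2⁻¹ ^ i := fun i =>
      calc ν (S i) univ ≤ 4 / minEnergy α n (S i) := hνmass _
        _ ≤ 4 / (2 ^ i * w) := ENNReal.div_le_div_left (hSw i) 4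
        _ = 4 / w * 2⁻¹ ^ i := by
          rw [div_eq_mul_inv, div_eq_mul_inv, ENNReal.mul_inv (by simp) (by simp),
            ENNReal.inv_pow]
          ring
    calc (Measure.sum fun i => ν (S i)) univ = ∑' i, ν (S i) univ :=
          Measure.sum_apply _ MeasurableSet.univ
      _ ≤ ∑' i, 4 / w * 2⁻¹ ^ i := ENNReal.tsum_le_tsum hterm
      _ = 8 / w := by
        rw [ENNReal.tsum_mul_left, ENNReal.tsum_geometric_two, mul_comm, ← mul_div_assoc]
        norm_num
  · set B := {x ∈ A | pot α n (Measure.sum fun i => ν (S i)) x < 1}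
    have hBS : ∀ i, B ⊆ S i := by
      intro i
      induction i with
      | zero => exact sep_subset _ _
      | succ i ih =>
        refine fun x hx => ⟨ih hx, lt_of_le_of_lt ?_ hx.2⟩
        rw [pot_sum]
        exact ENNReal.le_tsum i
    exact ENNReal.eq_top_of_forall_two_pow_mul_le hA fun i =>
      (hSw i).trans (minEnergy_anti (hBS i))

lemma setLIntegral_ball_rieszK_zero_ne_top (hα : 0 < α) (hαn : α < n) (r : ℝ) :
    ∫⁻ y in ball (0 : Eucl n) r, rieszK α n y 0 ≠ ⊤ := by
  have hn : 0 < n := by exact_mod_cast hα.trans hαn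
  have : Nontrivial (Eucl n) := Module.nontrivial_of_finrank_pos (R := ℝ) (by simpa using hn)
  have hint : IntegrableOn (fun y : Eucl n => ‖y‖ ^ (α - n)) (ball 0 r) :=
    integrableOn_ball_of_norm_le_rpow (by simpa using Nat.one_le_iff_ne_zero.mpr hn.ne') (C := 1)
      (α := n - α) (by simpa using hα)
      (ae_of_all _ fun y => by simp [abs_of_nonneg (Real.rpow_nonneg (norm_nonneg y) _)])
      (measurable_norm.pow_const _).aestronglyMeasurable
  refine (lintegral_congr_ae ?_).trans_ne hint.2.ne
  filter_upwards [ae_restrict_of_ae (Measure.ae_ne volume 0)] with y hy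
  rw [rieszK, sub_zero, Real.enorm_of_nonneg (Real.rpow_nonneg (norm_nonneg y) _),
    ENNReal.ofReal_rpow_of_pos (norm_pos_iff.mpr hy)]

lemma setLIntegral_ball_rieszK (z : Eucl n) (r : ℝ) :
    ∫⁻ x in ball z r, rieszK α n x z = ∫⁻ y in ball 0 r, rieszK α n y 0 := by
  rw [← lintegral_indicator measurableSet_ball, ← lintegral_indicator measurableSet_ball,
    ← lintegral_add_right_eq_self _ z]
  congr with y
  simp [indicator, rieszK, dist_eq_norm]

lemma setLIntegral_ball_pot_ne_top (hα : 0 < α) (hαn : α < n) {ζ : Measure (Eucl n)}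
    [IsFiniteMeasure ζ] {R : ℝ} (hζ : ζ (ball 0 R)ᶜ = 0) (ρ : ℝ) :
    ∫⁻ x in ball 0 ρ, pot α n ζ x ≠ ⊤ := by
  have hζR : ∀ᵐ z ∂ζ, z ∈ ball (0 : Eucl n) R := mem_ae_iff.mpr hζ
  refine ne_of_lt ?_
  calc ∫⁻ x in ball 0 ρ, pot α n ζ x = ∫⁻ z, (∫⁻ x in ball 0 ρ, rieszK α n x z) ∂ζ :=
        lintegral_lintegral_swap measurable_rieszK.aemeasurable
    _ ≤ ∫⁻ _, (∫⁻ y in ball 0 (ρ + R), rieszK α n y 0) ∂ζ := by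
        refine lintegral_mono_ae (hζR.mono fun z hz => ?_)
        rw [← setLIntegral_ball_rieszK z]
        refine lintegral_mono_set (ball_subset_ball' ?_)
        rw [mem_ball, dist_comm] at hz
        linarith
    _ = (∫⁻ y in ball 0 (ρ + R), rieszK α n y 0) * ζ univ := lintegral_const _
    _ < ⊤ := ENNReal.mul_lt_top
        (setLIntegral_ball_rieszK_zero_ne_top hα hαn _).lt_top (measure_lt_top ζ univ)

lemma exists_mem_ball_pot_ne_top (hα : 0 < α) (hαn : α < n) {ζ : Measure (Eucl n)}
    [IsFiniteMeasure ζ] {R ρ : ℝ} (hζ : ζ (ball 0 R)ᶜ = 0) (hρ : 0 < ρ) :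
    ∃ x ∈ ball (0 : Eucl n) ρ, pot α n ζ x ≠ ⊤ := by
  by_contra! h
  refine setLIntegral_ball_pot_ne_top hα hαn hζ ρ ?_
  rw [setLIntegral_congr_fun measurableSet_ball h, setLIntegral_const]
  exact ENNReal.top_mul (measure_ball_pos volume 0 hρ).ne'

lemma ofReal_half_pow_rpow_mul {q : ℝ} (hq : 0 < q) (k : ℕ) (m : ℝ≥0∞) :
    ENNReal.ofReal (q ^ k / 2) ^ (α - n) * m
      = ENNReal.ofReal (2 ^ ((n : ℝ) - α)) * (m / ENNReal.ofReal (q ^ ((k : ℝ) * (n - α)))) := by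
  have hqk : 0 < q ^ k := pow_pos hq k
  have hreal : (q ^ k / 2) ^ (α - n) = 2 ^ ((n : ℝ) - α) / q ^ ((k : ℝ) * (n - α)) := by
    rw [← neg_sub (n : ℝ), Real.rpow_neg (by positivity), ← Real.inv_rpow (by positivity),
      inv_div, Real.div_rpow zero_le_two hqk.le, Real.rpow_natCast_mul hq.le]
  rw [ENNReal.ofReal_rpow_of_pos (by positivity), hreal,
    ENNReal.ofReal_div_of_pos (Real.rpow_pos_of_pos hq _), div_eq_mul_inv, div_eq_mul_inv]
  ring

lemma tsum_pot_ne_top (hαn : α ≤ n) {q : ℝ} (hq : 1 < q) {ξ : ℕ → Measure (Eucl n)}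
    (hξ : ∀ k, ξ k {z | q ^ k ≤ ‖z‖}ᶜ = 0)
    (hsum : ∑' k : ℕ, ξ k univ / ENNReal.ofReal (q ^ ((k : ℝ) * (n - α))) ≠ ⊤)
    {x : Eucl n} (hx : ‖x‖ ≤ 1 / 2) : ∑' k, pot α n (ξ k) x ≠ ⊤ := by
  have hterm : ∀ k : ℕ, pot α n (ξ k) x ≤ ENNReal.ofReal (2 ^ ((n : ℝ) - α)) *
      (ξ k univ / ENNReal.ofReal (q ^ ((k : ℝ) * (n - α)))) := by
    intro k
    rw [← ofReal_half_pow_rpow_mul (by linarith)]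
    have hfar : ∀ᵐ z ∂ξ k, q ^ k ≤ ‖z‖ := mem_ae_iff.mpr (hξ k)
    refine pot_le_of_le_norm_sub hαn (hfar.mono fun z hz => ?_)
    have hqk : 1 ≤ q ^ k := one_le_pow₀ hq.le
    linarith [norm_sub_norm_le z x, norm_sub_rev x z]
  refine ne_top_of_le_ne_top ?_ (ENNReal.tsum_le_tsum hterm)
  rw [ENNReal.tsum_mul_left]
  exact ENNReal.mul_ne_top ENNReal.ofReal_ne_top hsum

lemma exists_measure_sublevel_eq_top_of_cover {ι : Type*} [Countable ι] {A : Set (Eucl n)}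
    {R : ι → Set (Eucl n)} (hR : ∀ i, MeasurableSet (R i)) (hA : A ⊆ ⋃ i, R i)
    (hW : ∀ i, minEnergy α n (A ∩ R i) ≠ 0) :
    ∃ ξ : ι → Measure (Eucl n),
      (∀ i, ξ i (A ∩ R i)ᶜ = 0 ∧ ξ i univ ≤ 8 / minEnergy α n (A ∩ R i)) ∧
      minEnergy α n {x ∈ A | pot α n (Measure.sum ξ) x < 1} = ⊤ := by
  choose ξ hξA hξmass hξbad using fun i => exists_measure_minEnergy_sublevel_eq_top (hW i)
  refine ⟨ξ, fun i => ⟨hξA i, hξmass i⟩, minEnergy_eq_top_of_cover hR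
    ((sep_subset _ _).trans hA) fun i => top_unique ?_⟩
  refine (hξbad i).symm.trans_le (minEnergy_anti fun x hx => ⟨⟨hx.1.1, hx.2⟩, ?_⟩)
  exact (pot_mono (Measure.le_sum ξ i) x).trans_lt hx.1.2

def shellCover (q : ℝ) : ℕ → Set (Eucl n)
  | 0 => ball 0 1
  | k + 1 => {x | q ^ k ≤ ‖x‖ ∧ ‖x‖ < q ^ (k + 1)}

lemma measurableSet_shellCover (q : ℝ) : ∀ i, MeasurableSet (shellCover (n := n) q i)
  | 0 => measurableSet_ball
  | _ + 1 => (measurableSet_le measurable_const measurable_norm).inter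
      (measurableSet_lt measurable_norm measurable_const)

lemma isBounded_shellCover (q : ℝ) : ∀ i, Bornology.IsBounded (shellCover (n := n) q i)
  | 0 => isBounded_ball
  | k + 1 => (isBounded_ball (x := 0) (r := q ^ (k + 1))).subset fun _ hx =>
      mem_ball_zero_iff.mpr hx.2

lemma iUnion_shellCover {q : ℝ} (hq : 1 < q) : ⋃ i, shellCover (n := n) q i = univ := by
  refine iUnion_eq_univ_iff.mpr fun x => ?_
  rcases lt_or_ge ‖x‖ 1 with h | h
  · exact ⟨0, mem_ball_zero_iff.mpr h⟩
  · obtain ⟨k, hk⟩ := exists_nat_pow_near h hq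
    exact ⟨k + 1, hk⟩

end Riesz

open Riesz Metric

/-- If the Wiener-type series `Σ_k c_α(A ∩ {q^k ≤ |x| < q^{k+1}}) / q^{k(n−α)}`
converges, then there is a positive measure `ξ` whose Riesz potential is not
identically `+∞` and satisfies `U^ξ ≥ 1` nearly everywhere on `A`. -/
theorem exists_measure_pot_ge_one_ne {n : ℕ} {α : ℝ} (hn : 3 ≤ n) (hα : 0 < α)
    (hα2 : α ≤ 2) (A : Set (Eucl n)) (q : ℝ) (hq : 1 < q)
    (hsum : ∑' k : ℕ,
        innerCap α n (A ∩ {x | q ^ k ≤ ‖x‖ ∧ ‖x‖ < q ^ (k + 1)}) /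
          ENNReal.ofReal (q ^ ((k : ℝ) * ((n : ℝ) - α))) ≠ ⊤) :
    ∃ ξ : Measure (Eucl n), (∃ x, pot α n ξ x ≠ ⊤) ∧
      innerCap α n {x ∈ A | pot α n ξ x < 1} = 0 := by
  have hαn : α < n := by
    have : (3 : ℝ) ≤ n := by exact_mod_cast hn
    linarith
  have hW : ∀ i, minEnergy α n (A ∩ shellCover q i) ≠ 0 := fun i =>
    minEnergy_ne_zero hαn.le ((isBounded_shellCover q i).subset inter_subset_right)
  obtain ⟨ξ, hξ, hbad⟩ := exists_measure_sublevel_eq_top_of_cover (measurableSet_shellCover q)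
    ((subset_univ A).trans (iUnion_shellCover hq).ge) hW
  refine ⟨Measure.sum ξ, ?_, by rw [innerCap_eq_one_div_minEnergy, hbad, ENNReal.div_top]⟩
  have : IsFiniteMeasure (ξ 0) :=
    ⟨(hξ 0).2.trans_lt (ENNReal.div_lt_top (by norm_num) (hW 0))⟩
  obtain ⟨x, hx, hx₀⟩ := exists_mem_ball_pot_ne_top hα hαn
    (measure_mono_null (compl_subset_compl.mpr inter_subset_right) (hξ 0).1) one_half_pos
  have hmass : ∑' k : ℕ, ξ (k + 1) univ / ENNReal.ofReal (q ^ ((k : ℝ) * (n - α))) ≠ ⊤ := by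
    refine ne_top_of_le_ne_top (ENNReal.mul_ne_top (by norm_num : (8 : ℝ≥0∞) ≠ ⊤) hsum) ?_
    rw [← ENNReal.tsum_mul_left]
    refine ENNReal.tsum_le_tsum fun k => ?_
    rw [innerCap_eq_one_div_minEnergy, ← mul_div_assoc, mul_one_div]
    exact ENNReal.div_le_div_right (hξ (k + 1)).2 _
  have hfar : ∀ k : ℕ, ξ (k + 1) {z | q ^ k ≤ ‖z‖}ᶜ = 0 := fun k =>
    measure_mono_null (compl_subset_compl.mpr fun _ hz => hz.2.1) (hξ (k + 1)).1
  refine ⟨x, ?_⟩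
  rw [pot_sum, tsum_eq_zero_add' ENNReal.summable]
  exact ENNReal.add_ne_top.mpr ⟨hx₀, tsum_pot_ne_top hαn.le hq hfar hmass
    (by simpa using (mem_ball_zero_iff.mp hx).le)⟩
end
end
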